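/- arXiv:2505.01629 — 6 statements merged into one kernel-verified Lean document; each statement's English description precedes it below -/
import Mathlib

section
/- For indivisible items with two agents and m ≤ 4 items, there exists a mechanism that is truthful for chores and EF1 for chores. -/
open Finset

noncomputable section

/-- Total cost of a bundle `S` under an additive item-value function `c`. -/
def costOf {m : ℕ} (c : Fin m → ℝ) (S : Finset (Fin m)) : ℝ := ∑ o ∈ S, c o

/-- `A` is an (ordered) partition of the item set into the two agents' bundles. -/
def IsAlloc {m : ℕ} (A : Fin 2 → Finset (Fin m)) : Prop :=
  Disjoint (A 0) (A 1) ∧ A 0 ∪ A 1 = Finset.univ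

/-- A profile of additive item-value functions with nonnegative values. -/
def NonnegProfile {m : ℕ} (c : Fin 2 → Fin m → ℝ) : Prop := ∀ i o, 0 ≤ c i o

/-- `M` is truthful for chores: no agent can strictly decrease his cost by misreporting. -/
def TruthfulChores {m : ℕ} (M : (Fin 2 → Fin m → ℝ) → Fin 2 → Finset (Fin m)) : Prop :=
  ∀ c : Fin 2 → Fin m → ℝ, NonnegProfile c → ∀ (i : Fin 2) (c' : Fin m → ℝ), (∀ o, 0 ≤ c' o) →
    costOf (c i) (M c i) ≤ costOf (c i) (M (Function.update c i c') i)

/-- Allocation `A` is envy-free up to one item for chores w.r.t. cost profile `c`. -/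
def EF1Chores {m : ℕ} (c : Fin 2 → Fin m → ℝ) (A : Fin 2 → Finset (Fin m)) : Prop :=
  ∀ i j : Fin 2, A i ≠ ∅ → ∃ o ∈ A i, costOf (c i) ((A i).erase o) ≤ costOf (c i) (A j)

/-! Agent 0 owns the items 0, 1 and agent 1 owns 2, 3. Each agent keeps the item of her own pair
that she reports to be cheaper and receives the item the other agent rejects from his pair. Her
bundle depends on her report only through her own choice, so lying cannot help her; and once the
received item is dropped, what she keeps costs her at most the item she rejected, which lies in
the other bundle. Fewer than four items are handled by padding with zero-cost dummy items. -/

abbrev Mechanism (m : ℕ) := (Fin 2 → Fin m → ℝ) → Fin 2 → Finset (Fin m)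

section Cost

variable {m : ℕ} {c : Fin m → ℝ}

lemma costOf_mono (hc : ∀ o, 0 ≤ c o) {S T : Finset (Fin m)} (h : S ⊆ T) :
    costOf c S ≤ costOf c T :=
  Finset.sum_le_sum_of_subset_of_nonneg h fun o _ _ => hc o

lemma costOf_pair {a b : Fin m} (h : a ≠ b) : costOf c {a, b} = c a + c b :=
  Finset.sum_pair h

lemma costOf_singleton (a : Fin m) : costOf c {a} = c a :=
  Finset.sum_singleton _ _

lemma exists_costOf_erase_le_self (hc : ∀ o, 0 ≤ c o) {S : Finset (Fin m)} (hS : S.Nonempty) :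
    ∃ o ∈ S, costOf c (S.erase o) ≤ costOf c S :=
  hS.imp fun _ ho => ⟨ho, costOf_mono hc (S.erase_subset _)⟩

end Cost

section Padding

variable {m n : ℕ} (e : Fin m ↪ Fin n)

def padCost (d : Fin m → ℝ) : Fin n → ℝ := Function.extend e d 0

def restrictMechanism (M : Mechanism n) : Mechanism m :=
  fun c i => (M (padCost e ∘ c) i).preimage e e.injective.injOn

variable {e}

lemma padCost_nonneg {d : Fin m → ℝ} (hd : ∀ o, 0 ≤ d o) (k : Fin n) : 0 ≤ padCost e d k := by
  by_cases hk : ∃ o, e o = k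
  · obtain ⟨o, rfl⟩ := hk
    simpa [padCost, e.injective.extend_apply] using hd o
  · simp [padCost, Function.extend_apply' _ _ _ hk]

lemma padCost_eq_zero {d : Fin m → ℝ} {k : Fin n} (hk : k ∉ Set.range e) : padCost e d k = 0 := by
  simp [padCost, Function.extend_apply' _ _ _ hk]

lemma costOf_preimage (d : Fin m → ℝ) (S : Finset (Fin n)) :
    costOf d (S.preimage e e.injective.injOn) = costOf (padCost e d) S := by
  rw [costOf, costOf, ← Finset.sum_preimage e S e.injective.injOn _
    fun k _ hk => padCost_eq_zero hk]
  simp [padCost, e.injective.extend_apply]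

lemma preimage_erase (S : Finset (Fin n)) (o : Fin m) :
    (S.erase (e o)).preimage e e.injective.injOn = (S.preimage e e.injective.injOn).erase o := by
  ext x
  simp [e.injective.eq_iff]

variable {M : Mechanism n}

lemma isAlloc_restrictMechanism {c : Fin 2 → Fin m → ℝ} (hM : IsAlloc (M (padCost e ∘ c))) :
    IsAlloc (restrictMechanism e M c) := by
  refine ⟨Finset.disjoint_preimage hM.1, ?_⟩
  ext o
  have h := Finset.mem_univ (e o)
  rw [← hM.2, Finset.mem_union] at h
  simpa [restrictMechanism] using h

lemma truthfulChores_restrictMechanism (hM : TruthfulChores M) :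
    TruthfulChores (restrictMechanism e M) := by
  intro c hc i c' hc'
  have hpad : NonnegProfile (padCost e ∘ c) := fun j => padCost_nonneg (hc j)
  simpa only [restrictMechanism, costOf_preimage, Function.comp_update, Function.comp_apply] using
    hM _ hpad i _ (padCost_nonneg hc')

-- An EF1 witness outside the range of `e` costs nothing, so then even the whole bundle is
-- envy-free and any item of the restricted bundle is a witness.
lemma ef1Chores_restrictMechanism {c : Fin 2 → Fin m → ℝ} (hc : NonnegProfile c)
    (hM : EF1Chores (padCost e ∘ c) (M (padCost e ∘ c))) :
    EF1Chores c (restrictMechanism e M c) := by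
  intro i j hi
  have hA : M (padCost e ∘ c) i ≠ ∅ := by
    rintro hA
    simp [restrictMechanism, hA] at hi
  obtain ⟨o, ho, hle⟩ := hM i j hA
  simp only [restrictMechanism, costOf_preimage]
  by_cases hor : o ∈ Set.range e
  · obtain ⟨o, rfl⟩ := hor
    refine ⟨o, by simpa using ho, ?_⟩
    rwa [← preimage_erase, costOf_preimage]
  · obtain ⟨o', ho'⟩ := Finset.nonempty_iff_ne_empty.2 hi
    refine ⟨o', ho', ?_⟩
    calc costOf (c i) ((M (padCost e ∘ c) i).preimage e e.injective.injOn |>.erase o')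
        ≤ costOf (c i) ((M (padCost e ∘ c) i).preimage e e.injective.injOn) :=
          costOf_mono (hc i) (Finset.erase_subset _ _)
      _ = costOf (padCost e (c i)) ((M (padCost e ∘ c) i).erase o) := by
          rw [costOf_preimage, costOf, costOf, Finset.sum_erase _ (padCost_eq_zero hor)]
      _ ≤ _ := hle

end Padding

section Choice

variable {α : Type*} (c : α → ℝ) (a b : α)

def cheaper : α := if c a ≤ c b then a else b

def costlier : α := if c a ≤ c b then b else a

variable {c a b}

lemma cheaper_eq_or : cheaper c a b = a ∨ cheaper c a b = b := by
  unfold cheaper; split_ifs <;> simp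

lemma costlier_eq_or : costlier c a b = a ∨ costlier c a b = b := by
  unfold costlier; split_ifs <;> simp

lemma cheaper_le_of_eq_or {x : α} (hx : x = a ∨ x = b) : c (cheaper c a b) ≤ c x := by
  unfold cheaper; split_ifs <;> rcases hx with rfl | rfl <;> linarith

lemma cheaper_le_costlier : c (cheaper c a b) ≤ c (costlier c a b) :=
  cheaper_le_of_eq_or costlier_eq_or

end Choice

lemma Fin.two_add_one_ne (i : Fin 2) : i + 1 ≠ i := by
  fin_cases i <;> decide

lemma Fin.two_add_one_add_one (i : Fin 2) : i + 1 + 1 = i := by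
  fin_cases i <;> decide

lemma Fin.two_eq_or_eq_add_one (i j : Fin 2) : j = i ∨ j = i + 1 := by
  fin_cases i <;> fin_cases j <;> decide

def pairFst : Fin 2 → Fin 4 := ![0, 2]

def pairSnd : Fin 2 → Fin 4 := ![1, 3]

def keptItem (c : Fin 2 → Fin 4 → ℝ) (i : Fin 2) : Fin 4 := cheaper (c i) (pairFst i) (pairSnd i)

def passedItem (c : Fin 2 → Fin 4 → ℝ) (i : Fin 2) : Fin 4 :=
  costlier (c i) (pairFst i) (pairSnd i)

def pairSwap : Mechanism 4 := fun c i => {passedItem c (i + 1), keptItem c i}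

lemma passedItem_ne_keptItem (c c' : Fin 2 → Fin 4 → ℝ) (i : Fin 2) :
    passedItem c (i + 1) ≠ keptItem c' i := by
  rcases costlier_eq_or (c := c (i + 1)) (a := pairFst (i + 1)) (b := pairSnd (i + 1)) with h | h <;>
  rcases cheaper_eq_or (c := c' i) (a := pairFst i) (b := pairSnd i) with h' | h' <;>
  rw [passedItem, keptItem, h, h'] <;> fin_cases i <;> decide

lemma isAlloc_pairSwap (c : Fin 2 → Fin 4 → ℝ) : IsAlloc (pairSwap c) := by
  simp only [IsAlloc, pairSwap, zero_add, show (1 : Fin 2) + 1 = 0 from rfl, passedItem, keptItem,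
    cheaper, costlier]
  split_ifs <;> decide

lemma truthfulChores_pairSwap : TruthfulChores pairSwap := by
  intro c _ i c' _
  have hpassed : passedItem (Function.update c i c') (i + 1) = passedItem c (i + 1) := by
    simp only [passedItem, Function.update_of_ne (Fin.two_add_one_ne i)]
  have hkept : keptItem (Function.update c i c') i = cheaper c' (pairFst i) (pairSnd i) := by
    simp only [keptItem, Function.update_self]
  simp only [pairSwap]
  rw [costOf_pair (passedItem_ne_keptItem _ _ i), costOf_pair (passedItem_ne_keptItem _ _ i),
    hpassed, hkept]
  gcongr
  exact cheaper_le_of_eq_or cheaper_eq_or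

lemma ef1Chores_pairSwap {c : Fin 2 → Fin 4 → ℝ} (hc : NonnegProfile c) :
    EF1Chores c (pairSwap c) := by
  intro i j _
  obtain rfl | rfl := Fin.two_eq_or_eq_add_one i j
  · exact exists_costOf_erase_le_self (hc _) (Finset.insert_nonempty _ _)
  · refine ⟨passedItem c (i + 1), Finset.mem_insert_self _ _, ?_⟩
    calc costOf (c i) ((pairSwap c i).erase (passedItem c (i + 1)))
        ≤ costOf (c i) {keptItem c i} := costOf_mono (hc i) (Finset.erase_insert_subset _ _)
      _ ≤ costOf (c i) {passedItem c i} := by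
          rw [costOf_singleton, costOf_singleton]
          exact cheaper_le_costlier
      _ ≤ costOf (c i) (pairSwap c (i + 1)) := by
          refine costOf_mono (hc i) ?_
          simp [pairSwap, Fin.two_add_one_add_one]

/-- For two agents and at most four indivisible items, there exists a truthful and EF1
mechanism for chores. -/
theorem exists_truthful_ef1_chores {m : ℕ} (hm : m ≤ 4) :
    ∃ M : (Fin 2 → Fin m → ℝ) → Fin 2 → Finset (Fin m),
      (∀ c, NonnegProfile c → IsAlloc (M c)) ∧
      TruthfulChores M ∧
      (∀ c, NonnegProfile c → EF1Chores c (M c)) :=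
  ⟨restrictMechanism (Fin.castLEEmb hm) pairSwap,
    fun _ _ => isAlloc_restrictMechanism (isAlloc_pairSwap _),
    truthfulChores_restrictMechanism truthfulChores_pairSwap,
    fun _ hc => ef1Chores_restrictMechanism hc
      (ef1Chores_pairSwap fun j => padCost_nonneg (hc j))⟩
end
end

section
/- For indivisible items with two agents, for every number of items m there exists a mechanism that is truthful for chores and (2 − 1/⌊max{2, m}/2⌋)-MMS for chores. -/
open Finset

noncomputable section

/-- Maximin (minimax) share for chores with two agents: the minimum over all ordered
partitions `(S, Sᶜ)` of the maximum bundle cost. -/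
def MMSchores {m : ℕ} (c : Fin m → ℝ) : ℝ :=
  sInf {x | ∃ S : Finset (Fin m), x = max (costOf c S) (costOf c Sᶜ)}

-- selector of a maximum-cost item
noncomputable def selMax {n : ℕ} (f : Fin (n+1) → ℝ) : Fin (n+1) :=
  (Finset.exists_max_image Finset.univ f ⟨0, Finset.mem_univ 0⟩).choose

lemma selMax_spec {n : ℕ} (f : Fin (n+1) → ℝ) : ∀ o, f o ≤ f (selMax f) := by
  intro o
  have h := (Finset.exists_max_image Finset.univ f ⟨0, Finset.mem_univ 0⟩).choose_spec
  exact h.2 o (Finset.mem_univ o)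

lemma mms_nonneg {m : ℕ} (c : Fin m → ℝ) (hc : ∀ o, 0 ≤ c o) : 0 ≤ MMSchores c := by
  unfold MMSchores
  refine le_csInf ⟨_, ∅, rfl⟩ ?_
  rintro x ⟨S, rfl⟩
  have : (0:ℝ) ≤ costOf c S := Finset.sum_nonneg fun o _ => hc o
  exact this.trans (le_max_left _ _)

lemma item_le_mms {m : ℕ} (c : Fin m → ℝ) (hc : ∀ o, 0 ≤ c o) (o : Fin m) :
    c o ≤ MMSchores c := by
  unfold MMSchores
  refine le_csInf ⟨_, ∅, rfl⟩ ?_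
  rintro x ⟨S, rfl⟩
  by_cases h : o ∈ S
  · exact le_trans (Finset.single_le_sum (fun i _ => hc i) h) (le_max_left _ _)
  · exact le_trans (Finset.single_le_sum (fun i _ => hc i) (Finset.mem_compl.2 h))
      (le_max_right _ _)

lemma costOf_compl_singleton {n : ℕ} (c : Fin (n+1) → ℝ) (o : Fin (n+1)) :
    costOf c {o}ᶜ = costOf c Finset.univ - c o := by
  have h := Finset.sum_compl_add_sum ({o} : Finset (Fin (n+1))) c
  rw [Finset.sum_singleton] at h
  simp only [costOf]
  linarith

lemma main_ineq {n : ℕ} (c : Fin (n+1) → ℝ) (hc : ∀ o, 0 ≤ c o) (o : Fin (n+1))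
    (ho : ∀ o', c o' ≤ c o) :
    costOf c {o}ᶜ ≤ (2 - 1 / ((max 2 (n+1) / 2 : ℕ) : ℝ)) * MMSchores c := by
  set k : ℕ := max 2 (n+1) / 2 with hk
  have hk1 : 1 ≤ k := by omega
  have hkr : (1:ℝ) ≤ (k:ℝ) := by exact_mod_cast hk1
  have hkpos : (0:ℝ) < (k:ℝ) := by linarith
  have hβ : (0:ℝ) < 2 - 1 / (k:ℝ) := by
    have : 1 / (k:ℝ) ≤ 1 := by
      rw [div_le_one hkpos]; exact hkr
    linarith
  -- per-partition bound
  have key : ∀ S : Finset (Fin (n+1)),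
      costOf c {o}ᶜ ≤ (2 - 1 / (k:ℝ)) * max (costOf c S) (costOf c Sᶜ) := by
    intro S
    set M := max (costOf c S) (costOf c Sᶜ) with hM
    have hcardsum : S.card + Sᶜ.card = n + 1 := by
      have := Finset.card_add_card_compl S
      simpa [Fintype.card_fin] using this
    have hm2k : n + 1 ≤ 2 * k + 1 := by omega
    -- pick the small side B (card ≤ k) and the other side A
    obtain ⟨A, B, hAB, hBcard, hA, hB⟩ :
        ∃ A B : Finset (Fin (n+1)),
          costOf c A + costOf c B = costOf c Finset.univ ∧ B.card ≤ k ∧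
          costOf c A ≤ M ∧ costOf c B ≤ M := by
      have hsum : costOf c S + costOf c Sᶜ = costOf c Finset.univ := by
        have := Finset.sum_compl_add_sum S c
        simp only [costOf]; linarith
      rcases le_or_gt (Sᶜ.card) k with h | h
      · exact ⟨S, Sᶜ, hsum, h, le_max_left _ _, le_max_right _ _⟩
      · exact ⟨Sᶜ, S, by linarith, by omega, le_max_right _ _, le_max_left _ _⟩
    have hBh : costOf c B ≤ (k:ℝ) * c o := by
      have h1 : costOf c B ≤ B.card • c o :=
        Finset.sum_le_card_nsmul B c (c o) (fun x _ => ho x)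
      have h2 : (B.card : ℝ) * c o ≤ (k:ℝ) * c o := by
        apply mul_le_mul_of_nonneg_right _ (hc o)
        exact_mod_cast hBcard
      calc costOf c B ≤ (B.card : ℝ) * c o := by simpa [nsmul_eq_mul] using h1
        _ ≤ (k:ℝ) * c o := h2
    rw [costOf_compl_singleton, ← hAB]
    have P : (k:ℝ) * (costOf c A + costOf c B - c o) ≤ (2*(k:ℝ) - 1) * M := by
      nlinarith [mul_nonneg (sub_nonneg.2 hkr) (sub_nonneg.2 hB),
        mul_nonneg (le_of_lt hkpos) (sub_nonneg.2 hA)]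
    have hMform : (2 - 1/(k:ℝ)) * M = ((2*(k:ℝ) - 1) * M) / (k:ℝ) := by
      field_simp
    rw [hMform, le_div_iff₀ hkpos]
    linarith
  -- pass to the infimum
  have hlb : costOf c {o}ᶜ / (2 - 1/(k:ℝ)) ≤ MMSchores c := by
    unfold MMSchores
    refine le_csInf ⟨_, ∅, rfl⟩ ?_
    rintro x ⟨S, rfl⟩
    rw [div_le_iff₀ hβ]
    calc costOf c {o}ᶜ ≤ (2 - 1/(k:ℝ)) * max (costOf c S) (costOf c Sᶜ) := key S
      _ = max (costOf c S) (costOf c Sᶜ) * (2 - 1/(k:ℝ)) := by ring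
  have h2 : (2 - 1/(k:ℝ)) * (costOf c {o}ᶜ / (2 - 1/(k:ℝ))) = costOf c {o}ᶜ := by
    rw [mul_comm, div_mul_cancel₀ _ (ne_of_gt hβ)]
  have h3 := mul_le_mul_of_nonneg_left hlb (le_of_lt hβ)
  linarith

/-- For two agents and any number `m` of indivisible items, there exists a truthful
mechanism for chores that is `(2 - 1/⌊max{2, m}/2⌋)`-MMS for chores. -/
theorem exists_truthful_mms_chores (m : ℕ) :
    ∃ M : (Fin 2 → Fin m → ℝ) → Fin 2 → Finset (Fin m),
      (∀ c, NonnegProfile c → IsAlloc (M c)) ∧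
      TruthfulChores M ∧
      (∀ c, NonnegProfile c → ∀ i,
        costOf (c i) (M c i) ≤ (2 - 1 / ((max 2 m / 2 : ℕ) : ℝ)) * MMSchores (c i)) := by
  rcases m with _ | n
  · -- no items: allocate everything (i.e. nothing) trivially
    refine ⟨fun _ _ => ∅, ?_, ?_, ?_⟩
    · intro c _
      constructor
      · exact Finset.disjoint_empty_left _
      · simp
    · intro c _ i c' _
      exact le_refl _
    · intro c hc i
      have h0 : costOf (c i) (∅ : Finset (Fin 0)) = 0 := Finset.sum_empty
      rw [h0]
      have hβ : (0:ℝ) ≤ 2 - 1 / ((max 2 0 / 2 : ℕ) : ℝ) := by norm_num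
      exact mul_nonneg hβ (mms_nonneg _ (fun o => hc i o))
  · -- at least one item
    refine ⟨fun c i => if i = 0 then ({selMax (c 0)} : Finset (Fin (n+1)))ᶜ
      else {selMax (c 0)}, ?_, ?_, ?_⟩
    · intro c _
      constructor
      · simp only [if_pos rfl, if_neg (by decide : (1 : Fin 2) ≠ 0)]
        exact disjoint_compl_left
      · simp only [if_pos rfl, if_neg (by decide : (1 : Fin 2) ≠ 0)]
        rw [Finset.union_comm]
        simp
    · intro c _ i c' _
      fin_cases i
      · simp only [Fin.zero_eta, Fin.isValue, if_pos rfl, if_true]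
        have hupd : Function.update c 0 c' 0 = c' := Function.update_self 0 c' c
        rw [hupd]
        rw [costOf_compl_singleton, costOf_compl_singleton]
        have := selMax_spec (c 0) (selMax c')
        linarith
      · simp only [Fin.mk_one, Fin.isValue, if_neg (by decide : (1 : Fin 2) ≠ 0)]
        have hupd : Function.update c 1 c' 0 = c 0 :=
          Function.update_of_ne (by decide) c' c
        rw [hupd]
    · intro c hc i
      fin_cases i
      · simp only [Fin.zero_eta, Fin.isValue, if_pos rfl, if_true]
        exact main_ineq (c 0) (fun o => hc 0 o) (selMax (c 0)) (selMax_spec (c 0))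
      · simp only [Fin.mk_one, Fin.isValue, if_neg (by decide : (1 : Fin 2) ≠ 0)]
        have h1 : costOf (c 1) {selMax (c 0)} = c 1 (selMax (c 0)) := Finset.sum_singleton _ _
        rw [h1]
        have h2 : c 1 (selMax (c 0)) ≤ MMSchores (c 1) := item_le_mms _ (fun o => hc 1 o) _
        have hk1 : 1 ≤ max 2 (n+1) / 2 := by omega
        have hkr : (1:ℝ) ≤ ((max 2 (n+1) / 2 : ℕ) : ℝ) := by exact_mod_cast hk1
        have hβ : (1:ℝ) ≤ 2 - 1 / ((max 2 (n+1) / 2 : ℕ) : ℝ) := by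
          have : 1 / ((max 2 (n+1) / 2 : ℕ) : ℝ) ≤ 1 := by
            rw [div_le_one (by linarith)]; exact hkr
          linarith
        have hm := mms_nonneg (c 1) (fun o => hc 1 o)
        nlinarith
end
end

section
/- For every n ≥ 2 and every number m of homogeneous divisible items, there exists a mechanism for chores that is strictly truthful, envy-free for chores, and proportional for chores on all normalized additive cost profiles. -/
open Finset

noncomputable section

/-- Value (cost or utility) of a fractional bundle `x` under additive item values `c`. -/
def dotVal {m : ℕ} (c x : Fin m → ℝ) : ℝ := ∑ o, x o * c o

/-- `x` is a fractional allocation of the `m` items among the `n` agents. -/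
def IsFracAlloc {n m : ℕ} (x : Fin n → Fin m → ℝ) : Prop :=
  (∀ i o, 0 ≤ x i o ∧ x i o ≤ 1) ∧ (∀ o, ∑ i, x i o = 1)

/-- A normalized profile: nonnegative item values summing to `1` for each agent. -/
def NormalizedProfile (n m : ℕ) (c : Fin n → Fin m → ℝ) : Prop :=
  (∀ i o, 0 ≤ c i o) ∧ (∀ i, ∑ o, c i o = 1)

/-!
The mechanism is a quadratic scoring rule. With `s_q(o) = ‖q‖² - 2 q(o)`, agent `i` receives the
share `1/n + (s_{c_i}(o) - mean_j s_{c_j}(o)) / (8n)` of item `o`. For any normalized cost vector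
`p`, the cost of agent `i`'s bundle under `p` is `1/n + (‖c_i - p‖² - mean_j ‖c_j - p‖²) / (8n)`.
Taking `p = c_i`: reporting `r` instead of `c_i` raises `i`'s cost by `(1 - 1/n) ‖r - c_i‖² / (8n)`,
`j`'s bundle costs `‖c_j - c_i‖² / (8n)` more than `i`'s own, and `i`'s own cost is `1/n` minus a
nonnegative mean of squared distances.
-/

open Matrix

variable {κ : Type*} [Fintype κ]

section LinearOrderedRing

variable {R : Type*} [Ring R] [LinearOrder R] [IsStrictOrderedRing R]

theorem dotProduct_self_nonneg (v : κ → R) : 0 ≤ v ⬝ᵥ v :=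
  Fintype.sum_nonneg fun o => mul_self_nonneg (v o)

theorem dotProduct_self_pos {v : κ → R} (hv : v ≠ 0) : 0 < v ⬝ᵥ v :=
  (dotProduct_self_nonneg v).lt_of_ne' (dotProduct_self_eq_zero.not.mpr hv)

end LinearOrderedRing

theorem dotVal_eq_dotProduct {m : ℕ} (c x : Fin m → ℝ) : dotVal c x = c ⬝ᵥ x :=
  dotProduct_comm x c

/-- The quadratic (Brier) score of the forecast `q` at the outcome `o`, minus the constant `1`. -/
def quadScore (q : κ → ℝ) : κ → ℝ := fun o => q ⬝ᵥ q - 2 * q o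

theorem dotProduct_quadScore {p : κ → ℝ} (hp : ∑ o, p o = 1) (q : κ → ℝ) :
    p ⬝ᵥ quadScore q = (q - p) ⬝ᵥ (q - p) - p ⬝ᵥ p := by
  have hp1 : p ⬝ᵥ (fun _ => q ⬝ᵥ q) = q ⬝ᵥ q := by
    simp [dotProduct, ← Finset.sum_mul, hp]
  have hscore : quadScore q = (fun _ => q ⬝ᵥ q) - (2 : ℝ) • q := rfl
  rw [hscore, dotProduct_sub, dotProduct_smul, hp1]
  simp only [sub_dotProduct, dotProduct_sub, dotProduct_comm q p, smul_eq_mul]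
  ring

theorem quadScore_mem_Icc {q : κ → ℝ} (hq0 : 0 ≤ q) (hq1 : ∑ o, q o = 1) (o : κ) :
    quadScore q o ∈ Set.Icc (-2) 1 := by
  have hle : ∀ k, q k ≤ 1 := fun k => hq1 ▸ single_le_sum (fun k _ => hq0 k) (mem_univ k)
  have hsq0 : 0 ≤ q ⬝ᵥ q := dotProduct_nonneg_of_nonneg hq0 hq0
  have hsq1 : q ⬝ᵥ q ≤ 1 := by
    calc q ⬝ᵥ q ≤ 1 ⬝ᵥ q := dotProduct_le_dotProduct_of_nonneg_right hle hq0
      _ = 1 := by rw [one_dotProduct, hq1]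
  have : 0 ≤ q o := hq0 o
  have := hle o
  constructor <;> simp only [quadScore] <;> linarith

/-- The factor `8` keeps the shares in `[0, 1]`, since the scores of normalized vectors lie in
`[-2, 1]`. -/
def quadMech (n : ℕ) (c : Fin n → κ → ℝ) (i : Fin n) : κ → ℝ :=
  (n : ℝ)⁻¹ • 1 + (8 * n : ℝ)⁻¹ • (quadScore (c i) - (n : ℝ)⁻¹ • ∑ j, quadScore (c j))

variable {n : ℕ}

theorem sum_quadMech_apply (hn : 0 < n) (c : Fin n → κ → ℝ) (o : κ) :
    ∑ i, quadMech n c i o = 1 := by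
  have : (n : ℝ) ≠ 0 := by positivity
  simp only [quadMech, Pi.add_apply, Pi.smul_apply, Pi.sub_apply, Pi.one_apply, smul_eq_mul,
    sum_add_distrib, ← mul_sum, sum_sub_distrib, Finset.sum_apply, sum_const, card_univ,
    Fintype.card_fin, nsmul_eq_mul]
  field_simp
  ring

theorem quadMech_apply_mem_Icc (hn : 2 ≤ n) {c : Fin n → κ → ℝ} (hc0 : ∀ i, 0 ≤ c i)
    (hc1 : ∀ i, ∑ o, c i o = 1) (i : Fin n) (o : κ) : quadMech n c i o ∈ Set.Icc 0 1 := by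
  have hn' : (2 : ℝ) ≤ n := by exact_mod_cast hn
  set s := fun j => quadScore (c j) o
  have hs j : s j ∈ Set.Icc (-2) 1 := quadScore_mem_Icc (hc0 j) (hc1 j) o
  have hmean : (∑ j, s j) / n ∈ Set.Icc (-2) 1 := by
    have lo := card_nsmul_le_sum univ s (-2) fun j _ => (hs j).1
    have hi := sum_le_card_nsmul univ s 1 fun j _ => (hs j).2
    simp only [card_univ, Fintype.card_fin, nsmul_eq_mul] at lo hi
    rw [Set.mem_Icc, le_div_iff₀ (by positivity), div_le_one (by positivity)]
    constructor <;> linarith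
  have hmech : quadMech n c i o = (8 + s i - (∑ j, s j) / n) / (8 * n) := by
    simp only [quadMech, s, Pi.add_apply, Pi.smul_apply, Pi.sub_apply, Pi.one_apply, smul_eq_mul,
      Finset.sum_apply]
    field_simp
    ring
  rw [hmech, Set.mem_Icc, div_le_one (by positivity)]
  constructor
  · apply div_nonneg <;> linarith [(hs i).1, hmean.2]
  · linarith [(hs i).2, hmean.1]

theorem isFracAlloc_quadMech {m : ℕ} (hn : 2 ≤ n) {c : Fin n → Fin m → ℝ}
    (hc : NormalizedProfile n m c) : IsFracAlloc (quadMech n c) :=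
  ⟨fun i o => quadMech_apply_mem_Icc hn hc.1 hc.2 i o, sum_quadMech_apply (by omega) c⟩

theorem dotProduct_quadMech {p : κ → ℝ} (hp : ∑ o, p o = 1) (c : Fin n → κ → ℝ) (i : Fin n) :
    p ⬝ᵥ quadMech n c i = (n : ℝ)⁻¹ + (8 * n : ℝ)⁻¹ *
      ((c i - p) ⬝ᵥ (c i - p) - (n : ℝ)⁻¹ * ∑ j, (c j - p) ⬝ᵥ (c j - p)) := by
  have : (n : ℝ) ≠ 0 := by have := i.pos; positivity
  simp only [quadMech, dotProduct_add, dotProduct_smul, dotProduct_sub, dotProduct_sum,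
    dotProduct_one, hp, dotProduct_quadScore hp, sum_sub_distrib, sum_const, card_univ,
    Fintype.card_fin, nsmul_eq_mul, smul_eq_mul]
  field_simp
  ring

theorem dotProduct_quadMech_update_sub {c : Fin n → κ → ℝ} {i : Fin n} (hci : ∑ o, c i o = 1)
    (r : κ → ℝ) :
    c i ⬝ᵥ quadMech n (Function.update c i r) i - c i ⬝ᵥ quadMech n c i =
      (8 * n : ℝ)⁻¹ * (1 - (n : ℝ)⁻¹) * ((r - c i) ⬝ᵥ (r - c i)) := by
  have hsum : ∑ j, (Function.update c i r j - c i) ⬝ᵥ (Function.update c i r j - c i) =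
      (r - c i) ⬝ᵥ (r - c i) + ∑ j, (c j - c i) ⬝ᵥ (c j - c i) := by
    rw [Fintype.sum_eq_add_sum_compl i, Fintype.sum_eq_add_sum_compl i (fun j => _ ⬝ᵥ _),
      Function.update_self, sub_self, zero_dotProduct, zero_add]
    refine congrArg _ (sum_congr rfl fun j hj => ?_)
    rw [Function.update_of_ne (by simpa using hj)]
  rw [dotProduct_quadMech hci, dotProduct_quadMech hci, hsum, Function.update_self, sub_self,
    zero_dotProduct]
  ring

theorem dotProduct_quadMech_sub_self {c : Fin n → κ → ℝ} {i : Fin n} (hci : ∑ o, c i o = 1)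
    (j : Fin n) :
    c i ⬝ᵥ quadMech n c j - c i ⬝ᵥ quadMech n c i =
      (8 * n : ℝ)⁻¹ * ((c j - c i) ⬝ᵥ (c j - c i)) := by
  rw [dotProduct_quadMech hci, dotProduct_quadMech hci, sub_self, zero_dotProduct]
  ring

theorem dotProduct_quadMech_self {c : Fin n → κ → ℝ} {i : Fin n} (hci : ∑ o, c i o = 1) :
    c i ⬝ᵥ quadMech n c i =
      (n : ℝ)⁻¹ - (8 * n * n : ℝ)⁻¹ * ∑ j, (c j - c i) ⬝ᵥ (c j - c i) := by
  rw [dotProduct_quadMech hci, sub_self, zero_dotProduct]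
  ring

theorem quadMech_truthful {c : Fin n → κ → ℝ} {i : Fin n} (hci : ∑ o, c i o = 1) (r : κ → ℝ) :
    c i ⬝ᵥ quadMech n c i ≤ c i ⬝ᵥ quadMech n (Function.update c i r) i := by
  have hn : (1 : ℝ) ≤ n := by exact_mod_cast i.pos
  have : 0 ≤ 1 - (n : ℝ)⁻¹ := sub_nonneg.mpr (inv_le_one_of_one_le₀ hn)
  have := dotProduct_self_nonneg (r - c i)
  have hgain := dotProduct_quadMech_update_sub hci r
  have : 0 ≤ (8 * n : ℝ)⁻¹ * (1 - (n : ℝ)⁻¹) * ((r - c i) ⬝ᵥ (r - c i)) := by positivity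
  linarith

theorem quadMech_strictly_truthful (hn : 1 < n) {c : Fin n → κ → ℝ} {i : Fin n}
    (hci : ∑ o, c i o = 1) {r : κ → ℝ} (hr : r ≠ c i) :
    c i ⬝ᵥ quadMech n c i < c i ⬝ᵥ quadMech n (Function.update c i r) i := by
  have hn : (1 : ℝ) < n := by exact_mod_cast hn
  have : 0 < 1 - (n : ℝ)⁻¹ := sub_pos.mpr (inv_lt_one_of_one_lt₀ hn)
  have := dotProduct_self_pos (sub_ne_zero.mpr hr)
  have hgain := dotProduct_quadMech_update_sub hci r
  have : 0 < (8 * n : ℝ)⁻¹ * (1 - (n : ℝ)⁻¹) * ((r - c i) ⬝ᵥ (r - c i)) := by positivity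
  linarith

theorem quadMech_envy_free {c : Fin n → κ → ℝ} {i : Fin n} (hci : ∑ o, c i o = 1) (j : Fin n) :
    c i ⬝ᵥ quadMech n c i ≤ c i ⬝ᵥ quadMech n c j := by
  have := dotProduct_self_nonneg (c j - c i)
  have henvy := dotProduct_quadMech_sub_self hci j
  have : 0 ≤ (8 * n : ℝ)⁻¹ * ((c j - c i) ⬝ᵥ (c j - c i)) := by positivity
  linarith

theorem quadMech_proportional {c : Fin n → κ → ℝ} {i : Fin n} (hci : ∑ o, c i o = 1) :
    c i ⬝ᵥ quadMech n c i ≤ (n : ℝ)⁻¹ := by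
  rw [dotProduct_quadMech_self hci, sub_le_self_iff]
  exact mul_nonneg (by positivity) (sum_nonneg fun j _ => dotProduct_self_nonneg _)

/-- For every `n ≥ 2` and every number `m` of homogeneous divisible items, there exists a
mechanism for chores that is strictly truthful, envy-free for chores, and proportional for
chores on all normalized additive cost profiles. -/
theorem exists_strictly_truthful_ef_prop_chores (n m : ℕ) (hn : 2 ≤ n) :
    ∃ M : (Fin n → Fin m → ℝ) → Fin n → Fin m → ℝ,
      -- M outputs fractional allocations
      (∀ c, NormalizedProfile n m c → IsFracAlloc (M c)) ∧
      -- truthful for chores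
      (∀ c, NormalizedProfile n m c → ∀ (i : Fin n) (c' : Fin m → ℝ),
        (∀ o, 0 ≤ c' o) → (∑ o, c' o = 1) →
        dotVal (c i) (M c i) ≤ dotVal (c i) (M (Function.update c i c') i)) ∧
      -- strictly truthful: the inequality is strict whenever the misreport differs
      (∀ c, NormalizedProfile n m c → ∀ (i : Fin n) (c' : Fin m → ℝ),
        (∀ o, 0 ≤ c' o) → (∑ o, c' o = 1) → c' ≠ c i →
        dotVal (c i) (M c i) < dotVal (c i) (M (Function.update c i c') i)) ∧
      -- envy-free for chores
      (∀ c, NormalizedProfile n m c → ∀ i j : Fin n,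
        dotVal (c i) (M c i) ≤ dotVal (c i) (M c j)) ∧
      -- proportional for chores
      (∀ c, NormalizedProfile n m c → ∀ i : Fin n,
        dotVal (c i) (M c i) ≤ 1 / (n : ℝ)) := by
  simp only [dotVal_eq_dotProduct, one_div]
  refine ⟨quadMech n, fun c hc => isFracAlloc_quadMech hn hc, ?_, ?_, ?_, ?_⟩
  · exact fun c hc i r _ _ => quadMech_truthful (hc.2 i) r
  · exact fun c hc i r _ _ hr => quadMech_strictly_truthful hn (hc.2 i) hr
  · exact fun c hc i j => quadMech_envy_free (hc.2 i) j
  · exact fun c hc i => quadMech_proportional (hc.2 i)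
end
end

section
/- Let v be a bi-valued utility profile with values in {p, q}, p > q > 0, over n agents and m homogeneous divisible items, where each agent i has at least one item o with v_i(o) = p. Let H_v be the set of items valued q by every agent, let L = m/n, and let x' be a fractional allocation that fully allocates every item in O \ H_v, allocates no fraction of any item in H_v, and maximizes f_v(x) = Π_{i} ( Σ_{o : v_i(o) = p} x_i(o) ) among all such allocations. Then for every item o ∈ O \ H_v, letting N_o = { i : x'_i(o) > 0 }, either |x'_i| > L for every i ∈ N_o, or |x'_i| ≤ L for every i ∈ N_o. -/
open Finset

noncomputable section

/-- The profile `v` is bi-valued with values `p` and `q`. -/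
def BiVal {n m : ℕ} (p q : ℝ) (v : Fin n → Fin m → ℝ) : Prop :=
  ∀ i o, v i o = p ∨ v i o = q

/-- `x` is a feasible (partial) allocation for the profile `v`: fractions lie in `[0, 1]`,
every item outside `H_v` (the set of items valued `q` by everyone) is fully allocated, and
no fraction of any item in `H_v` is allocated. -/
def FeasibleMNW {n m : ℕ} (q : ℝ) (v : Fin n → Fin m → ℝ) (x : Fin n → Fin m → ℝ) : Prop :=
  (∀ i o, 0 ≤ x i o ∧ x i o ≤ 1) ∧
  (∀ o : Fin m, ¬ (∀ i, v i o = q) → ∑ i, x i o = 1) ∧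
  (∀ (i : Fin n) (o : Fin m), (∀ j, v j o = q) → x i o = 0)

/-- The objective `f_v(x) = ∏ᵢ Σ_{o : vᵢ(o) = p} xᵢ(o)`. -/
def fObj {n m : ℕ} (p : ℝ) (v : Fin n → Fin m → ℝ) (x : Fin n → Fin m → ℝ) : ℝ :=
  ∏ i : Fin n, ∑ o : Fin m, if v i o = p then x i o else 0

/-- The size `|xᵢ|` of agent `i`'s bundle. -/
def bundleSize {m : ℕ} (xi : Fin m → ℝ) : ℝ := ∑ o, xi o

/-- Agent `i`'s `p`-value under allocation `x`. -/
def fac {n m : ℕ} (p : ℝ) (v : Fin n → Fin m → ℝ) (x : Fin n → Fin m → ℝ) (i : Fin n) : ℝ :=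
  ∑ o, if v i o = p then x i o else 0

lemma fObj_eq_prod_fac {n m : ℕ} (p : ℝ) (v x : Fin n → Fin m → ℝ) :
    fObj p v x = ∏ i, fac p v x i := rfl

lemma fac_shift {m : ℕ} (p : ℝ) (vi xi : Fin m → ℝ) (o : Fin m) (c : ℝ) :
    (∑ b, if vi b = p then xi b + (if b = o then c else 0) else 0)
      = (∑ b, if vi b = p then xi b else 0) + (if vi o = p then c else 0) := by
  have h : ∀ b, (if vi b = p then xi b + (if b = o then c else 0) else 0)
      = (if vi b = p then xi b else 0)
        + (if b = o then (if vi o = p then c else 0) else 0) := by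
    intro b
    by_cases h1 : b = o
    · subst h1; by_cases h2 : vi b = p <;> simp [h2]
    · by_cases h2 : vi b = p <;> simp [h1, h2]
  rw [Finset.sum_congr rfl (fun b _ => h b), Finset.sum_add_distrib,
    Finset.sum_ite_eq' Finset.univ o (fun _ => if vi o = p then c else 0)]
  simp

/-- Transferring `ε ≤ x' i o` of item `o` from agent `i` to agent `j` keeps feasibility. -/
lemma transfer_feasible {n m : ℕ} {q : ℝ} {v x' : Fin n → Fin m → ℝ}
    (hx' : FeasibleMNW q v x') {i j : Fin n} (hij : i ≠ j) {o : Fin m}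
    (ho : ¬ ∀ a, v a o = q) {ε : ℝ} (hε0 : 0 ≤ ε) (hεi : ε ≤ x' i o) :
    FeasibleMNW q v (fun a b =>
      x' a b + (if a = j ∧ b = o then ε else 0) - (if a = i ∧ b = o then ε else 0)) := by
  obtain ⟨h1, h2, h3⟩ := hx'
  have hpair : x' i o + x' j o ≤ 1 := by
    have hs := h2 o ho
    have hsum2 : ∑ a ∈ ({i, j} : Finset (Fin n)), x' a o = x' i o + x' j o :=
      Finset.sum_pair (f := fun a => x' a o) hij
    have hle2 : ∑ a ∈ ({i, j} : Finset (Fin n)), x' a o ≤ ∑ a, x' a o :=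
      Finset.sum_le_sum_of_subset_of_nonneg (Finset.subset_univ _)
        (fun a _ _ => (h1 a o).1)
    rw [hsum2, hs] at hle2
    exact hle2
  refine ⟨?_, ?_, ?_⟩
  · intro a b
    by_cases hbo : b = o
    · subst hbo
      by_cases hai : a = i
      · subst hai
        simp only [hij, and_true, if_false, if_true, and_self, false_and]
        constructor
        · linarith [hεi]
        · linarith [(h1 a b).2]
      · by_cases haj : a = j
        · subst haj
          simp only [hai, and_true, if_true, if_false, and_self, false_and]
          constructor
          · linarith [(h1 a b).1]
          · linarith [hpair]
        · simp only [hai, haj, false_and, if_false]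
          simpa using h1 a b
    · simp only [hbo, and_false, if_false]
      simpa using h1 a b
  · intro b hb
    rw [Finset.sum_sub_distrib, Finset.sum_add_distrib]
    by_cases hbo : b = o
    · subst hbo
      simp [Finset.sum_ite_eq', h2 b hb]
    · simp [hbo, h2 b hb]
  · intro a b hbH
    have hbo : b ≠ o := by rintro rfl; exact ho hbH
    simp [hbo, h3 a b hbH]

/-- For a maximizer `x'` of `f_v` over feasible partial allocations, for every item
`o ∉ H_v`, the agents receiving a positive fraction of `o` either all have bundle size
greater than `L = m / n`, or all have bundle size at most `L`. -/
theorem maximizer_bundle_size_dichotomy (n m : ℕ) (p q : ℝ) (hq : 0 < q) (hpq : q < p)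
    (v : Fin n → Fin m → ℝ) (hv : BiVal p q v)
    (hp : ∀ i : Fin n, ∃ o : Fin m, v i o = p)
    (x' : Fin n → Fin m → ℝ) (hx' : FeasibleMNW q v x')
    (hmax : ∀ x : Fin n → Fin m → ℝ, FeasibleMNW q v x → fObj p v x ≤ fObj p v x') :
    ∀ o : Fin m, ¬ (∀ i, v i o = q) →
      (∀ i : Fin n, 0 < x' i o → (m : ℝ) / (n : ℝ) < bundleSize (x' i)) ∨
      (∀ i : Fin n, 0 < x' i o → bundleSize (x' i) ≤ (m : ℝ) / (n : ℝ)) := by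
  classical
  intro o ho
  rcases Nat.eq_zero_or_pos n with hn | hn
  · left; intro i _; exact absurd i.pos (by omega)
  have hpne : p ≠ q := ne_of_gt hpq
  have hqnp : q ≠ p := ne_of_lt hpq
  obtain ⟨h1, h2, h3⟩ := hx'
  have hx'feas : FeasibleMNW q v x' := ⟨h1, h2, h3⟩
  have hnR : (0 : ℝ) < n := by exact_mod_cast hn
  -- the objective of the maximizer is positive
  have hfacnn : ∀ i, 0 ≤ fac p v x' i := by
    intro i
    refine Finset.sum_nonneg fun b _ => ?_
    by_cases hb : v i b = p <;> simp [hb, (h1 i b).1]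
  have hx'pos : 0 < fObj p v x' := by
    set x0 : Fin n → Fin m → ℝ := fun a b => if (∀ c, v c b = q) then 0 else (n : ℝ)⁻¹
      with hx0def
    have hx0 : FeasibleMNW q v x0 := by
      refine ⟨?_, ?_, ?_⟩
      · intro a b
        by_cases hb : ∀ c, v c b = q
        · simp [hx0def, hb]
        · simp only [hx0def, hb, if_false]
          constructor
          · positivity
          · rw [inv_le_one_iff₀]; right; exact_mod_cast hn
      · intro b hb
        simp only [hx0def, hb, if_false]
        rw [Finset.sum_const, Finset.card_univ, Fintype.card_fin, nsmul_eq_mul]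
        field_simp
      · intro a b hb; simp [hx0def, hb]
    have h0pos : 0 < fObj p v x0 := by
      rw [fObj_eq_prod_fac]
      refine Finset.prod_pos fun i _ => ?_
      obtain ⟨oi, hoi⟩ := hp i
      have hnot : ¬ ∀ c, v c oi = q := fun hall => hpne (hoi.symm.trans (hall i))
      have hterm : (if v i oi = p then x0 i oi else 0) = (n : ℝ)⁻¹ := by
        simp [hoi, hx0def, hnot]
      have hle : (if v i oi = p then x0 i oi else 0) ≤ fac p v x0 i := by
        refine Finset.single_le_sum (f := fun b => if v i b = p then x0 i b else 0)
          (fun b _ => ?_) (Finset.mem_univ oi)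
        by_cases hb : v i b = p
        · simp only [hb, if_true]
          by_cases hb2 : ∀ c, v c b = q <;> simp [hx0def, hb2] <;> positivity
        · simp [hb]
      have : (0 : ℝ) < (n : ℝ)⁻¹ := by positivity
      calc (0:ℝ) < (n : ℝ)⁻¹ := this
        _ = (if v i oi = p then x0 i oi else 0) := hterm.symm
        _ ≤ fac p v x0 i := hle
    exact lt_of_lt_of_le h0pos (hmax x0 hx0)
  have hpos : ∀ i, 0 < fac p v x' i := by
    intro i
    rcases (hfacnn i).lt_or_eq with h | h
    · exact h
    · exfalso
      have : fObj p v x' = 0 := by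
        rw [fObj_eq_prod_fac]
        exact Finset.prod_eq_zero (Finset.mem_univ i) h.symm
      linarith
  -- split-product helper
  have hsplit : ∀ (i j : Fin n), i ≠ j → ∀ g : Fin n → ℝ,
      ∏ a, g a = g i * g j * ∏ a ∈ Finset.univ \ {i, j}, g a := by
    intro i j hij g
    rw [← Finset.prod_sdiff (Finset.subset_univ ({i, j} : Finset (Fin n))),
      Finset.prod_pair hij]
    ring
  -- Lemma B: every fractionally received item (outside H) is valued p by the recipient
  have hBval : ∀ (b : Fin m), ¬ (∀ a, v a b = q) → ∀ i, 0 < x' i b → v i b = p := by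
    intro b hb i hi
    by_contra hip
    have hiq : v i b = q := (hv i b).resolve_left hip
    have hb' := hb
    push_neg at hb'
    obtain ⟨j, hj⟩ := hb'
    have hjp : v j b = p := (hv j b).resolve_right hj
    have hij : i ≠ j := by rintro rfl; exact hip hjp
    set y : Fin n → Fin m → ℝ := fun a c =>
      x' a c + (if a = j ∧ c = b then x' i b else 0) - (if a = i ∧ c = b then x' i b else 0)
      with hy
    have hyfeas : FeasibleMNW q v y :=
      transfer_feasible hx'feas hij hb (le_of_lt hi) (le_refl _)
    have hyi : fac p v y i = fac p v x' i := by
      have hyc : ∀ c, y i c = x' i c + (if c = b then -(x' i b) else 0) := by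
        intro c
        by_cases hc : c = b <;> simp [hy, hc, hij]
      unfold fac
      rw [Finset.sum_congr rfl (fun c _ => by rw [hyc c]), fac_shift]
      simp [hiq, hqnp]
    have hyj : fac p v y j = fac p v x' j + x' i b := by
      have hyc : ∀ c, y j c = x' j c + (if c = b then x' i b else 0) := by
        intro c
        by_cases hc : c = b <;> simp [hy, hc, hij.symm]
      unfold fac
      rw [Finset.sum_congr rfl (fun c _ => by rw [hyc c]), fac_shift]
      simp [hjp]
    have hyrest : ∀ a ∈ Finset.univ \ ({i, j} : Finset (Fin n)),
        fac p v y a = fac p v x' a := by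
      intro a ha
      simp only [Finset.mem_sdiff, Finset.mem_insert, Finset.mem_singleton] at ha
      have hai : a ≠ i := fun h => ha.2 (Or.inl h)
      have haj : a ≠ j := fun h => ha.2 (Or.inr h)
      unfold fac
      refine Finset.sum_congr rfl fun c _ => ?_
      simp [hy, hai, haj]
    have hR : 0 < ∏ a ∈ Finset.univ \ ({i, j} : Finset (Fin n)), fac p v x' a :=
      Finset.prod_pos fun a _ => hpos a
    have hle := hmax y hyfeas
    rw [fObj_eq_prod_fac, fObj_eq_prod_fac, hsplit i j hij, hsplit i j hij,
      Finset.prod_congr rfl hyrest, hyi, hyj] at hle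
    nlinarith [mul_pos (mul_pos (hpos i) hi) hR, hpos i, hpos j, hR, hi]
  -- Lemma C: all recipients of item o have equal p-value
  have hCeq : ∀ i j, 0 < x' i o → 0 < x' j o → fac p v x' i = fac p v x' j := by
    have key : ∀ i j, 0 < x' i o → 0 < x' j o → ¬ fac p v x' i < fac p v x' j := by
      intro i j hi hj hlt
      have hij : j ≠ i := by rintro rfl; exact lt_irrefl _ hlt
      have hip : v i o = p := hBval o ho i hi
      have hjp : v j o = p := hBval o ho j hj
      set ε : ℝ := min (x' j o) ((fac p v x' j - fac p v x' i) / 2) with hε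
      have hε0 : 0 < ε := lt_min hj (by linarith)
      have hεle : ε ≤ x' j o := min_le_left _ _
      have hεhalf : ε ≤ (fac p v x' j - fac p v x' i) / 2 := min_le_right _ _
      set y : Fin n → Fin m → ℝ := fun a c =>
        x' a c + (if a = i ∧ c = o then ε else 0) - (if a = j ∧ c = o then ε else 0)
        with hy
      have hij' : i ≠ j := fun h => hij h.symm
      have hyfeas : FeasibleMNW q v y :=
        transfer_feasible hx'feas hij ho (le_of_lt hε0) hεle
      have hyi : fac p v y i = fac p v x' i + ε := by
        have hyc : ∀ c, y i c = x' i c + (if c = o then ε else 0) := by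
          intro c
          by_cases hc : c = o <;> simp [hy, hc, hij, hij', sub_eq_add_neg]
        unfold fac
        rw [Finset.sum_congr rfl (fun c _ => by rw [hyc c]), fac_shift]
        simp [hip]
      have hyj : fac p v y j = fac p v x' j + (-ε) := by
        have hyc : ∀ c, y j c = x' j c + (if c = o then -ε else 0) := by
          intro c
          by_cases hc : c = o <;> simp [hy, hc, hij, hij', sub_eq_add_neg]
        unfold fac
        rw [Finset.sum_congr rfl (fun c _ => by rw [hyc c]), fac_shift]
        simp [hjp]
      have hyrest : ∀ a ∈ Finset.univ \ ({i, j} : Finset (Fin n)),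
          fac p v y a = fac p v x' a := by
        intro a ha
        simp only [Finset.mem_sdiff, Finset.mem_insert, Finset.mem_singleton] at ha
        have hai : a ≠ i := fun h => ha.2 (Or.inl h)
        have haj : a ≠ j := fun h => ha.2 (Or.inr h)
        unfold fac
        refine Finset.sum_congr rfl fun c _ => ?_
        simp [hy, hai, haj]
      have hR : 0 < ∏ a ∈ Finset.univ \ ({i, j} : Finset (Fin n)), fac p v x' a :=
        Finset.prod_pos fun a _ => hpos a
      have hle := hmax y hyfeas
      rw [fObj_eq_prod_fac, fObj_eq_prod_fac, hsplit i j hij', hsplit i j hij',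
        Finset.prod_congr rfl hyrest, hyi, hyj] at hle
      have hgap : 0 < fac p v x' j - fac p v x' i - ε := by linarith
      nlinarith [mul_pos (mul_pos hε0 hgap) hR, hpos i, hpos j, hR, hε0]
    intro i j hi hj
    exact le_antisymm (not_lt.mp (key j i hj hi)) (not_lt.mp (key i j hi hj))
  -- Lemma D: each agent's bundle size equals their p-value
  have hD : ∀ i, bundleSize (x' i) = fac p v x' i := by
    intro i
    unfold bundleSize fac
    refine Finset.sum_congr rfl fun b _ => ?_
    by_cases hbp : v i b = p
    · simp [hbp]
    · have hbq : v i b = q := (hv i b).resolve_left hbp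
      have hzero : x' i b = 0 := by
        by_cases hH : ∀ a, v a b = q
        · exact h3 i b hH
        · rcases (h1 i b).1.lt_or_eq with h | h
          · exact absurd (hBval b hH i h) hbp
          · exact h.symm
      simp [hbp, hzero]
  by_cases hcase : ∃ i, 0 < x' i o ∧ bundleSize (x' i) ≤ (m : ℝ) / (n : ℝ)
  · right
    intro j hj
    obtain ⟨i, hi, hile⟩ := hcase
    rw [hD, ← hCeq i j hi hj, ← hD]
    exact hile
  · left
    intro j hj
    push_neg at hcase
    exact hcase j hj
end
end

section
/- Let v be a bi-valued utility profile with values in {p, q}, p > q > 0, over n agents and m homogeneous divisible items, where each agent i has at least one item o with v_i(o) = p. Let H_v be the set of items valued q by every agent, let L = m/n, and let x' be a fractional allocation that fully allocates every item in O \ H_v, allocates no fraction of any item in H_v, and maximizes f_v(x) = Π_{i} ( Σ_{o : v_i(o) = p} x_i(o) ) among all such allocations. Then for every item o ∈ O \ H_v: if some agent i with x'_i(o) > 0 has |x'_i| > L, then every agent j with |x'_j| ≤ L has v_j(o) = q. -/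
open Finset

noncomputable section

/-- agent `i`'s "p-share". -/
def sh {n m : ℕ} (p : ℝ) (v x : Fin n → Fin m → ℝ) (i : Fin n) : ℝ :=
  ∑ o : Fin m, if v i o = p then x i o else 0

lemma fObj_eq {n m : ℕ} (p : ℝ) (v x : Fin n → Fin m → ℝ) :
    fObj p v x = ∏ i, sh p v x i := rfl

lemma sh_nonneg {n m : ℕ} {p q : ℝ} {v x : Fin n → Fin m → ℝ}
    (hx : FeasibleMNW q v x) (i : Fin n) : 0 ≤ sh p v x i := by
  refine Finset.sum_nonneg fun o _ => ?_
  split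
  · exact (hx.1 i o).1
  · exact le_rfl

lemma sh_le_bundle {n m : ℕ} {p q : ℝ} {v x : Fin n → Fin m → ℝ}
    (hx : FeasibleMNW q v x) (i : Fin n) : sh p v x i ≤ bundleSize (x i) := by
  refine Finset.sum_le_sum fun o _ => ?_
  split
  · exact le_rfl
  · exact (hx.1 i o).1

/-- Lemma A: existence of a feasible allocation with positive objective. -/
lemma exists_pos_feasible {n m : ℕ} {p q : ℝ} (hq : 0 < q) (hpq : q < p)
    {v : Fin n → Fin m → ℝ} (hv : BiVal p q v) (hp : ∀ i : Fin n, ∃ o : Fin m, v i o = p) :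
    ∃ x, FeasibleMNW q v x ∧ 0 < fObj p v x := by
  classical
  set N : Fin m → ℕ := fun o => (univ.filter (fun j : Fin n => v j o = p)).card with hN
  refine ⟨fun k o => if v k o = p then ((N o : ℝ))⁻¹ else 0, ?_, ?_⟩
  · refine ⟨fun i o => ?_, fun o ho => ?_, fun i o ho => ?_⟩
    · simp only
      constructor
      · split
        · positivity
        · exact le_rfl
      · split
        · rename_i h
          have h1 : 1 ≤ N o := Finset.card_pos.mpr ⟨i, by simp [h]⟩
          have : (1:ℝ) ≤ (N o : ℝ) := by exact_mod_cast h1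
          rw [inv_le_one_iff₀]; right; exact this
        · exact zero_le_one
    · push_neg at ho
      obtain ⟨i, hi⟩ := ho
      have hip : v i o = p := (hv i o).resolve_right hi
      have h1 : 0 < N o := Finset.card_pos.mpr ⟨i, by simp [hip]⟩
      simp only
      rw [← Finset.sum_filter, Finset.sum_const, nsmul_eq_mul]
      have h2 : ((N o : ℝ)) ≠ 0 := by exact_mod_cast h1.ne'
      show (N o : ℝ) * (N o : ℝ)⁻¹ = 1
      field_simp
    · have : v i o = q := ho i
      simp [this, hpq.ne]
  · rw [fObj_eq]
    refine Finset.prod_pos fun i _ => ?_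
    obtain ⟨o, hio⟩ := hp i
    have h1 : 0 < N o := Finset.card_pos.mpr ⟨i, by simp [hio]⟩
    have hterm : (0:ℝ) < if v i o = p then (if v i o = p then ((N o:ℝ))⁻¹ else 0) else 0 := by
      simp [hio]
      positivity
    refine lt_of_lt_of_le hterm ?_
    refine Finset.single_le_sum (f := fun o' => if v i o' = p then (if v i o' = p then ((N o':ℝ))⁻¹ else 0) else 0) (fun o' _ => ?_) (Finset.mem_univ o)
    split
    · positivity
    · exact le_rfl

/-- Transferring a small amount of item `o` from `a` to `b` improves the objective. -/
lemma transfer_step {n m : ℕ} {p q : ℝ} (hpq : q < p)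
    {v x : Fin n → Fin m → ℝ} (hx : FeasibleMNW q v x)
    (a b : Fin n) (hab : a ≠ b) (o : Fin m) (ho : ¬ (∀ i, v i o = q))
    (hbo : v b o = p) (ε : ℝ) (hε : 0 < ε) (hεa : ε ≤ x a o) (hεb : x b o + ε ≤ 1)
    (hpos : ∀ k, 0 < sh p v x k)
    (hgain : sh p v x a * sh p v x b <
      (sh p v x a - (if v a o = p then ε else 0)) * (sh p v x b + ε)) :
    ∃ y, FeasibleMNW q v y ∧ fObj p v x < fObj p v y := by
  classical
  set y : Fin n → Fin m → ℝ := fun k o' =>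
    if k = a ∧ o' = o then x a o - ε else if k = b ∧ o' = o then x b o + ε else x k o'
    with hy
  have hya : ∀ o', y a o' = if o' = o then x a o - ε else x a o' := by
    intro o'; simp only [hy]
    by_cases h : o' = o <;> simp [h, hab]
  have hyb : ∀ o', y b o' = if o' = o then x b o + ε else x b o' := by
    intro o'; simp only [hy]
    by_cases h : o' = o <;> simp [h, hab.symm]
  have hyk : ∀ k, k ≠ a → k ≠ b → ∀ o', y k o' = x k o' := by
    intro k hka hkb o'; simp [hy, hka, hkb]
  have hfeas : FeasibleMNW q v y := by
    refine ⟨fun i o' => ?_, fun o' ho' => ?_, fun i o' ho' => ?_⟩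
    · rcases eq_or_ne a i with rfl | hia
      · rw [hya]
        by_cases h : o' = o
        · rw [if_pos h]
          exact ⟨by linarith, by linarith [(hx.1 a o).2]⟩
        · rw [if_neg h]; exact hx.1 a o'
      · rcases eq_or_ne b i with rfl | hib
        · rw [hyb]
          by_cases h : o' = o
          · rw [if_pos h]
            exact ⟨by linarith [(hx.1 b o).1], hεb⟩
          · rw [if_neg h]; exact hx.1 b o'
        · rw [hyk i (Ne.symm hia) (Ne.symm hib)]; exact hx.1 i o'
    · have hsum : ∑ i, y i o' = ∑ i, x i o' := by
        by_cases h : o' = o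
        · subst h
          have hpt : ∀ i, y i o' = x i o' + ((if i = a then -ε else 0) + (if i = b then ε else 0)) := by
            intro i
            rcases eq_or_ne a i with rfl | hia
            · rw [hya, if_pos rfl, if_pos rfl, if_neg hab]; ring
            · rcases eq_or_ne b i with rfl | hib
              · rw [hyb, if_pos rfl, if_neg (Ne.symm hab), if_pos rfl]; ring
              · rw [hyk i (Ne.symm hia) (Ne.symm hib), if_neg (Ne.symm hia),
                  if_neg (Ne.symm hib)]; ring
          rw [Finset.sum_congr rfl fun i _ => hpt i, Finset.sum_add_distrib,
            Finset.sum_add_distrib]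
          simp
        · refine Finset.sum_congr rfl fun i _ => ?_
          rcases eq_or_ne i a with rfl | hia
          · rw [hya, if_neg h]
          · rcases eq_or_ne i b with rfl | hib
            · rw [hyb, if_neg h]
            · rw [hyk i hia hib]
      rw [hsum]; exact hx.2.1 o' ho'
    · have h : o' ≠ o := fun h => ho (h ▸ ho')
      rcases eq_or_ne a i with rfl | hia
      · rw [hya, if_neg h]; exact hx.2.2 a o' ho'
      · rcases eq_or_ne b i with rfl | hib
        · rw [hyb, if_neg h]; exact hx.2.2 b o' ho'
        · rw [hyk i (Ne.symm hia) (Ne.symm hib)]; exact hx.2.2 i o' ho'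
  -- shares
  have hsha : sh p v y a = sh p v x a - (if v a o = p then ε else 0) := by
    unfold sh
    have hpt : ∀ o', (if v a o' = p then y a o' else 0)
        = (if v a o' = p then x a o' else 0) - (if o' = o then (if v a o = p then ε else 0) else 0) := by
      intro o'
      rw [hya]
      by_cases h : o' = o
      · subst h; by_cases hv : v a o' = p <;> simp [hv]
      · simp [h]
    rw [Finset.sum_congr rfl fun o' _ => hpt o', Finset.sum_sub_distrib]
    simp
  have hshb : sh p v y b = sh p v x b + ε := by
    unfold sh
    have hpt : ∀ o', (if v b o' = p then y b o' else 0)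
        = (if v b o' = p then x b o' else 0) + (if o' = o then ε else 0) := by
      intro o'
      rw [hyb]
      by_cases h : o' = o
      · subst h; simp [hbo]
      · simp [h]
    rw [Finset.sum_congr rfl fun o' _ => hpt o', Finset.sum_add_distrib]
    simp
  have hshk : ∀ k, k ≠ a → k ≠ b → sh p v y k = sh p v x k := by
    intro k hka hkb
    unfold sh
    exact Finset.sum_congr rfl fun o' _ => by rw [hyk k hka hkb]
  -- product comparison
  refine ⟨y, hfeas, ?_⟩
  have hmem : b ∈ (univ : Finset (Fin n)).erase a := by simp [hab.symm]
  have hsplit : ∀ z : Fin n → Fin m → ℝ, fObj p v z =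
      sh p v z a * (sh p v z b * ∏ k ∈ ((univ : Finset (Fin n)).erase a).erase b, sh p v z k) := by
    intro z
    rw [fObj_eq, ← Finset.mul_prod_erase _ _ (Finset.mem_univ a),
      ← Finset.mul_prod_erase _ _ hmem]
  rw [hsplit x, hsplit y]
  have hrest : ∏ k ∈ ((univ : Finset (Fin n)).erase a).erase b, sh p v y k
      = ∏ k ∈ ((univ : Finset (Fin n)).erase a).erase b, sh p v x k := by
    refine Finset.prod_congr rfl fun k hk => ?_
    simp only [Finset.mem_erase] at hk
    exact hshk k hk.2.1 hk.1
  rw [hrest, hsha, hshb]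
  have hRpos : 0 < ∏ k ∈ ((univ : Finset (Fin n)).erase a).erase b, sh p v x k :=
    Finset.prod_pos fun k _ => hpos k
  calc sh p v x a * (sh p v x b * ∏ k ∈ ((univ : Finset (Fin n)).erase a).erase b, sh p v x k)
      = (sh p v x a * sh p v x b) * ∏ k ∈ ((univ : Finset (Fin n)).erase a).erase b, sh p v x k := by ring
    _ < ((sh p v x a - (if v a o = p then ε else 0)) * (sh p v x b + ε)) * ∏ k ∈ ((univ : Finset (Fin n)).erase a).erase b, sh p v x k :=
        mul_lt_mul_of_pos_right hgain hRpos
    _ = (sh p v x a - (if v a o = p then ε else 0)) * ((sh p v x b + ε) * ∏ k ∈ ((univ : Finset (Fin n)).erase a).erase b, sh p v x k) := by ring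

lemma two_le_one {n m : ℕ} {q : ℝ} {v x : Fin n → Fin m → ℝ}
    (hx : FeasibleMNW q v x) {a b : Fin n} (hab : a ≠ b) (o : Fin m)
    (ho : ¬ (∀ i, v i o = q)) : x a o + x b o ≤ 1 := by
  have h1 : ∑ k ∈ ({a, b} : Finset (Fin n)), x k o ≤ ∑ k, x k o :=
    Finset.sum_le_sum_of_subset_of_nonneg (Finset.subset_univ _)
      (fun k _ _ => (hx.1 k o).1)
  rw [Finset.sum_pair hab] at h1
  calc x a o + x b o ≤ ∑ k, x k o := h1
    _ = 1 := hx.2.1 o ho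

/-- For a maximizer `x'` of `f_v` over feasible partial allocations, for every item
`o ∉ H_v`: if some agent receiving a positive fraction of `o` has bundle size greater than
`L = m / n`, then every agent `j` with bundle size at most `L` values `o` at `q`. -/
theorem maximizer_large_bundle_implies_low_value (n m : ℕ) (p q : ℝ)
    (hq : 0 < q) (hpq : q < p)
    (v : Fin n → Fin m → ℝ) (hv : BiVal p q v)
    (hp : ∀ i : Fin n, ∃ o : Fin m, v i o = p)
    (x' : Fin n → Fin m → ℝ) (hx' : FeasibleMNW q v x')
    (hmax : ∀ x : Fin n → Fin m → ℝ, FeasibleMNW q v x → fObj p v x ≤ fObj p v x') :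
    ∀ o : Fin m, ¬ (∀ i, v i o = q) →
      (∃ i : Fin n, 0 < x' i o ∧ (m : ℝ) / (n : ℝ) < bundleSize (x' i)) →
      ∀ j : Fin n, bundleSize (x' j) ≤ (m : ℝ) / (n : ℝ) → v j o = q := by
  classical
  intro o ho ⟨i, hio, hiL⟩ j hjL
  by_contra hjq
  have hjp : v j o = p := (hv j o).resolve_right hjq
  have hij : i ≠ j := by
    rintro rfl; exact absurd hjL (not_le.mpr hiL)
  -- positive objective at the maximizer
  obtain ⟨x0, hx0, hx0pos⟩ := exists_pos_feasible hq hpq hv hp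
  have hobj : 0 < fObj p v x' := lt_of_lt_of_le hx0pos (hmax x0 hx0)
  have hpos : ∀ k, 0 < sh p v x' k := by
    intro k
    rcases lt_or_eq_of_le (sh_nonneg (p := p) hx' k) with h | h
    · exact h
    · exfalso
      rw [fObj_eq] at hobj
      rw [Finset.prod_eq_zero (Finset.mem_univ k) h.symm] at hobj
      exact lt_irrefl _ hobj
  -- at the maximizer, agent i only holds items it values at p
  have hieq : sh p v x' i = bundleSize (x' i) := by
    refine le_antisymm (sh_le_bundle hx' i) ?_
    unfold sh bundleSize
    refine Finset.sum_le_sum fun o' _ => ?_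
    by_cases hvo : v i o' = p
    · rw [if_pos hvo]
    · rw [if_neg hvo]
      have hiq : v i o' = q := (hv i o').resolve_left hvo
      rcases lt_or_eq_of_le (hx'.1 i o').1 with hpos' | h
      · exfalso
        -- transfer all of x' i o' to some agent valuing o' at p
        by_cases hH : ∀ k, v k o' = q
        · exact absurd (hx'.2.2 i o' hH) (ne_of_gt hpos')
        · push_neg at hH
          obtain ⟨k, hk⟩ := hH
          have hkp : v k o' = p := (hv k o').resolve_right hk
          have hik : i ≠ k := fun h => hvo (h ▸ hkp)
          have h2 := two_le_one hx' hik o' (by push_neg; exact ⟨k, hk⟩)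
          obtain ⟨y, hyf, hylt⟩ := transfer_step hpq hx' i k hik o'
            (by push_neg; exact ⟨k, hk⟩) hkp (x' i o') hpos' le_rfl
            (by linarith) hpos
            (by
              rw [if_neg hvo]
              have := hpos i
              nlinarith [hpos k])
          exact absurd (hmax y hyf) (not_le.mpr hylt)
      · rw [← h]
  -- now the main transfer from i to j
  have hSi : (m : ℝ) / (n : ℝ) < sh p v x' i := by rw [hieq]; exact hiL
  have hSj : sh p v x' j ≤ (m : ℝ) / (n : ℝ) :=
    le_trans (sh_le_bundle hx' j) hjL
  set Si := sh p v x' i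
  set Sj := sh p v x' j
  have hSiSj : Sj < Si := lt_of_le_of_lt hSj hSi
  set ε := min (x' i o) ((Si - Sj) / 2) with hε
  have hε0 : 0 < ε := lt_min hio (by linarith)
  have hεa : ε ≤ x' i o := min_le_left _ _
  have hεhalf : ε ≤ (Si - Sj) / 2 := min_le_right _ _
  have h2 := two_le_one hx' hij o ho
  obtain ⟨y, hyf, hylt⟩ := transfer_step hpq hx' i j hij o ho hjp ε hε0 hεa
    (by linarith) hpos
    (by
      have hδ : (if v i o = p then ε else 0) ≤ ε := by split <;> [exact le_rfl; exact le_of_lt hε0]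
      have hδ0 : 0 ≤ (if v i o = p then ε else 0) := by split <;> [exact le_of_lt hε0; exact le_rfl]
      have hSj0 : 0 ≤ Sj := le_of_lt (hpos j)
      have key : Si * Sj < (Si - ε) * (Sj + ε) := by nlinarith
      have : (Si - ε) * (Sj + ε) ≤ (Si - (if v i o = p then ε else 0)) * (Sj + ε) := by
        apply mul_le_mul_of_nonneg_right (by linarith) (by linarith)
      linarith)
  exact absurd (hmax y hyf) (not_le.mpr hylt)
end
end

section
/- Let A = (A_1,…,A_n) be an integral allocation of indivisible chores among n agents with additive cost functions c_1,…,c_n such that |A_i| ≤ |A_j| + 1 for all agents i, j, and suppose the items in each bundle A_i can be labeled o_i^1, o_i^2, …, o_i^{|A_i|} so that: (1) c_i(o_i^k) ≤ c_i(o_i^{k+1}) for every i and every k ∈ {1,…,|A_i|−1}; (2) for all i, j with |A_i| ≤ |A_j| and every k ∈ {1,…,|A_j|−1}, c_i(o_i^k) ≤ c_i(o_j^{k+1}); and (3) for all i, j with |A_i| > |A_j| and every k ∈ {1,…,|A_j|}, c_i(o_i^k) ≤ c_i(o_j^k). Then A is EF1 for chores. -/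
open Finset

noncomputable section

/-- `A` is an (ordered) partition of the item set into the `n` agents' bundles. -/
def IsAllocN {n m : ℕ} (A : Fin n → Finset (Fin m)) : Prop :=
  (∀ i j, i ≠ j → Disjoint (A i) (A j)) ∧ (∀ o : Fin m, ∃ i, o ∈ A i)

/-- An integral allocation of chores whose bundles can be labeled (0-based labels
`ℓ i 0, ℓ i 1, …, ℓ i (|A i| - 1)`) so that:
(1) within each bundle, costs are nondecreasing in the label;
(2) whenever `|A i| ≤ |A j|`, agent `i`'s `k`-th chore costs him at most agent `j`'s
`(k+1)`-st chore; and
(3) whenever `|A i| > |A j|`, agent `i`'s `k`-th chore costs him at most agent `j`'s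
`k`-th chore,
is EF1 for chores. -/
theorem ef1_of_ordered_labeling {n m : ℕ}
    (c : Fin n → Fin m → ℝ) (hc : ∀ i o, 0 ≤ c i o)
    (A : Fin n → Finset (Fin m)) (hA : IsAllocN A)
    (hbal : ∀ i j, (A i).card ≤ (A j).card + 1)
    (ℓ : Fin n → ℕ → Fin m)
    -- `ℓ i` enumerates the bundle `A i`
    (hmem : ∀ (i : Fin n) (k : ℕ), k < (A i).card → ℓ i k ∈ A i)
    (hinj : ∀ (i : Fin n) (k k' : ℕ), k < (A i).card → k' < (A i).card →
      ℓ i k = ℓ i k' → k = k')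
    (hsurj : ∀ (i : Fin n), ∀ o ∈ A i, ∃ k < (A i).card, ℓ i k = o)
    -- (1) nondecreasing costs within each bundle
    (h1 : ∀ (i : Fin n) (k : ℕ), k + 1 < (A i).card → c i (ℓ i k) ≤ c i (ℓ i (k + 1)))
    -- (2)
    (h2 : ∀ i j : Fin n, (A i).card ≤ (A j).card → ∀ k : ℕ, k + 1 < (A j).card →
      c i (ℓ i k) ≤ c i (ℓ j (k + 1)))
    -- (3)
    (h3 : ∀ i j : Fin n, (A j).card < (A i).card → ∀ k : ℕ, k < (A j).card →
      c i (ℓ i k) ≤ c i (ℓ j k)) :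
    -- conclusion: A is EF1 for chores
    ∀ i j : Fin n, A i ≠ ∅ →
      ∃ o ∈ A i, costOf (c i) ((A i).erase o) ≤ costOf (c i) (A j) := by
  intro i j hne
  have hcard : 0 < (A i).card := Finset.card_pos.mpr (Finset.nonempty_iff_ne_empty.mpr hne)
  set d := (A i).card - 1 with hd
  have hdlt : d < (A i).card := Nat.sub_lt hcard one_pos
  refine ⟨ℓ i d, hmem i d hdlt, ?_⟩
  have key : ∀ (t : Fin n), costOf (c i) (A t) = ∑ k ∈ Finset.range (A t).card, c i (ℓ t k) := by
    intro t
    rw [costOf]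
    refine (Finset.sum_bij (fun k _ => ℓ t k) ?_ ?_ ?_ ?_).symm
    · intro k hk; exact hmem t k (Finset.mem_range.mp hk)
    · intro k hk k' hk' h; exact hinj t k k' (Finset.mem_range.mp hk) (Finset.mem_range.mp hk') h
    · intro o ho; obtain ⟨k, hk, hko⟩ := hsurj t o ho; exact ⟨k, Finset.mem_range.mpr hk, hko⟩
    · intros; rfl
  have herase : costOf (c i) ((A i).erase (ℓ i d)) = ∑ k ∈ Finset.range d, c i (ℓ i k) := by
    have hsplitA : costOf (c i) ((A i).erase (ℓ i d)) + c i (ℓ i d) = costOf (c i) (A i) := by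
      rw [costOf, costOf, Finset.sum_erase_add _ _ (hmem i d hdlt)]
    have hsum := key i
    have hcd : (A i).card = d + 1 := (Nat.succ_pred_eq_of_pos hcard).symm
    rw [hcd, Finset.sum_range_succ] at hsum
    linarith
  rw [herase, key j]
  rcases le_or_gt (A i).card (A j).card with hle | hlt
  · calc ∑ k ∈ Finset.range d, c i (ℓ i k)
        ≤ ∑ k ∈ Finset.range d, c i (ℓ j (k + 1)) := by
          apply Finset.sum_le_sum
          intro k hk
          apply h2 i j hle
          have := Finset.mem_range.mp hk
          omega
      _ = ∑ k ∈ Finset.Ico 1 (d + 1), c i (ℓ j k) := by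
          rw [Finset.sum_Ico_eq_sum_range]
          simp [Nat.add_comm]
      _ ≤ ∑ k ∈ Finset.range (A j).card, c i (ℓ j k) := by
          apply Finset.sum_le_sum_of_subset_of_nonneg
          · intro k hk
            simp only [Finset.mem_Ico, Finset.mem_range] at hk ⊢
            omega
          · intros; apply hc
  · have heq : d = (A j).card := by have := hbal i j; omega
    rw [heq]
    apply Finset.sum_le_sum
    intro k hk
    exact h3 i j hlt k (Finset.mem_range.mp hk)
end
end
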